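/- arXiv:2509.14209 — 2 statements merged into one kernel-verified Lean document; each statement's English description precedes it below -/
import Mathlib

section
/- Let X be a locally compact complete separable metric space, Y a set, π : X → Y a map, and let μ_y, μ_{y'} be probability measures on X with supp(μ_y) = π^{-1}(y) and μ_{y'} concentrated on π^{-1}(y'). If W_1(μ_y, μ_{y'}) = d(π^{-1}(y), π^{-1}(y')), then d(x, π^{-1}(y')) = d(π^{-1}(y), π^{-1}(y')) for every x ∈ π^{-1}(y). In particular, if this holds for all pairs of fibers, the family {π^{-1}(y)} is a metric foliation. -/
/-!
Let `F = π⁻¹(y)`, `F' = π⁻¹(y')`, `D = d(F, F')` and `f = d(·, F')`. Pushing any coupling of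
`μ_y` and `μ_{y'}` forward to its first marginal gives `∫ f dμ_y ≤ W_1(μ_y, μ_{y'}) = D`, while
`f ≥ D` on `F`, which carries all of `μ_y`. Hence `f = D` almost everywhere, so the closed set
`{f ≤ D}` has full measure and contains the support `F`.
-/

open MeasureTheory ENNReal

noncomputable section

/-- The set of couplings of two measures: measures on `X × X` with the given marginals. -/
def couplings {X : Type*} [MeasurableSpace X] (μ ν : Measure X) : Set (Measure (X × X)) :=
  {γ | γ.map Prod.fst = μ ∧ γ.map Prod.snd = ν}

/-- The `p`-Wasserstein distance (valued in `ℝ≥0∞`):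
`W_p(μ,ν) = (inf_{γ ∈ Π(μ,ν)} ∫ d(x₁,x₂)^p dγ)^{1/p}`. -/
def wassersteinE {X : Type*} [PseudoEMetricSpace X] [MeasurableSpace X] (p : ℝ)
    (μ ν : Measure X) : ℝ≥0∞ :=
  (⨅ γ ∈ couplings μ ν, ∫⁻ z, edist z.1 z.2 ^ p ∂γ) ^ (1 / p)

/-- Distance between two subsets: `d(A,B) = inf {d(a,b) : a ∈ A, b ∈ B}`. -/
def setEDist {X : Type*} [PseudoEMetricSpace X] (A B : Set X) : ℝ≥0∞ :=
  ⨅ a ∈ A, ⨅ b ∈ B, edist a b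

/-- The support of a measure: points all of whose open neighbourhoods have positive measure. -/
def mSupport {X : Type*} [TopologicalSpace X] [MeasurableSpace X] (μ : Measure X) : Set X :=
  {x | ∀ U : Set X, IsOpen U → x ∈ U → 0 < μ U}

theorem mSupport_eq_support {X : Type*} [TopologicalSpace X] [MeasurableSpace X]
    (μ : Measure X) : mSupport μ = μ.support := by
  ext x
  simp only [mSupport, Measure.support_eq_forall_isOpen, Set.mem_ofPred_eq]
  exact forall_congr' fun _ => imp.swap

theorem wassersteinE_one_eq {X : Type*} [PseudoEMetricSpace X] [MeasurableSpace X]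
    (μ ν : Measure X) :
    wassersteinE 1 μ ν = ⨅ γ ∈ couplings μ ν, ∫⁻ z, edist z.1 z.2 ∂γ := by
  simp [wassersteinE]

theorem setEDist_le_infEDist_of_mem {X : Type*} [PseudoEMetricSpace X] {A B : Set X} {x : X}
    (hx : x ∈ A) : setEDist A B ≤ Metric.infEDist x B :=
  Metric.le_infEDist.mpr fun _ hb => iInf₂_le_of_le x hx (iInf₂_le _ hb)

theorem lintegral_infEDist_le_wassersteinE_one {X : Type*} [PseudoEMetricSpace X]
    [MeasurableSpace X] [OpensMeasurableSpace X] {μ ν : Measure X} {s : Set X}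
    (hν : ν sᶜ = 0) : ∫⁻ x, Metric.infEDist x s ∂μ ≤ wassersteinE 1 μ ν := by
  rw [wassersteinE_one_eq]
  refine le_iInf₂ fun γ ⟨hfst, hsnd⟩ => ?_
  have hsnd_mem : ∀ᵐ z ∂γ, z.2 ∈ s :=
    ae_of_ae_map measurable_snd.aemeasurable (by rwa [hsnd])
  rw [← hfst, lintegral_map Metric.continuous_infEDist.measurable measurable_fst]
  exact lintegral_mono_ae (hsnd_mem.mono fun z hz => Metric.infEDist_le_edist_of_mem hz)

theorem dist_to_fiber_eq_of_wasserstein_eq_general {X Y : Type*}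
    [MetricSpace X] [MeasurableSpace X] [BorelSpace X]
    [TopologicalSpace.SeparableSpace X]
    (π : X → Y) (y y' : Y) (μy μy' : Measure X)
    [IsProbabilityMeasure μy]
    (hsupp : mSupport μy = π ⁻¹' {y})
    (hconc : μy' (π ⁻¹' {y'})ᶜ = 0)
    (hW : wassersteinE 1 μy μy' = setEDist (π ⁻¹' {y}) (π ⁻¹' {y'})) :
    ∀ x ∈ π ⁻¹' {y},
      EMetric.infEdist x (π ⁻¹' {y'}) = setEDist (π ⁻¹' {y}) (π ⁻¹' {y'}) := by
  intro x hx
  set D := setEDist (π ⁻¹' {y}) (π ⁻¹' {y'})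
  set f : X → ℝ≥0∞ := fun z => Metric.infEDist z (π ⁻¹' {y'})
  have hf : Continuous f := Metric.continuous_infEDist
  refine le_antisymm ?_ (setEDist_le_infEDist_of_mem hx)
  rcases eq_top_or_lt_top D with hD | hD
  · exact hD ▸ le_top
  have hD_le_f : ∀ᵐ z ∂μy, D ≤ f z := by
    have hfiber : ∀ᵐ z ∂μy, z ∈ π ⁻¹' {y} := by
      rw [← hsupp, mSupport_eq_support]
      exact Measure.support_mem_ae
    exact hfiber.mono fun z hz => setEDist_le_infEDist_of_mem hz
  have hf_le_D : ∫⁻ z, f z ∂μy ≤ ∫⁻ _, D ∂μy := by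
    simpa [← hW] using lintegral_infEDist_le_wassersteinE_one (μ := μy) hconc
  have hf_eq_D : (fun _ => D) =ᵐ[μy] f :=
    ae_eq_of_ae_le_of_lintegral_le hD_le_f (by simpa using hD.ne) hf.measurable.aemeasurable
      hf_le_D
  have hsupp_sub : μy.support ⊆ {z | f z ≤ D} :=
    Measure.support_subset_of_isClosed (isClosed_le hf continuous_const)
      (hf_eq_D.mono fun z hz => hz.symm.le)
  exact hsupp_sub (by rwa [← mSupport_eq_support, hsupp])

/-- Let `μ_y`, `μ_{y'}` be probability measures with `supp(μ_y) = π⁻¹(y)` and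
`μ_{y'}` concentrated on `π⁻¹(y')`. If `W_1(μ_y, μ_{y'}) = d(π⁻¹(y), π⁻¹(y'))`, then
`d(x, π⁻¹(y')) = d(π⁻¹(y), π⁻¹(y'))` for every `x ∈ π⁻¹(y)`. -/
theorem dist_to_fiber_eq_of_wasserstein_eq {X Y : Type*}
    [MetricSpace X] [MeasurableSpace X] [BorelSpace X]
    [LocallyCompactSpace X] [CompleteSpace X] [TopologicalSpace.SeparableSpace X]
    (π : X → Y) (y y' : Y) (μy μy' : Measure X)
    [IsProbabilityMeasure μy] [IsProbabilityMeasure μy']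
    (hsupp : mSupport μy = π ⁻¹' {y})
    (hconc : μy' (π ⁻¹' {y'})ᶜ = 0)
    (hW : wassersteinE 1 μy μy' = setEDist (π ⁻¹' {y}) (π ⁻¹' {y'})) :
    ∀ x ∈ π ⁻¹' {y},
      EMetric.infEdist x (π ⁻¹' {y'}) = setEDist (π ⁻¹' {y}) (π ⁻¹' {y'}) :=
  dist_to_fiber_eq_of_wasserstein_eq_general π y y' μy μy' hsupp hconc hW
end
end

section
/- Let λ ≥ 1 and for y > 0 let E_y := {(x₁,x₂) ∈ ℝ² : x₁² + λ²x₂² = y²} be the ellipse with major radius y. Then for all y, y' > 0 the Euclidean distance between the ellipses satisfies d(E_y, E_{y'}) = |y − y'|/λ, the infimum being attained at the endpoints of the minor axes, (0, y/λ) and (0, y'/λ). -/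
open MeasureTheory ENNReal

noncomputable section

/-- The ellipse `E_y = {(x₁,x₂) : x₁² + λ²x₂² = y²}` in the Euclidean plane. -/
def Ell (lam y : ℝ) : Set (EuclideanSpace ℝ (Fin 2)) :=
  {x | x 0 ^ 2 + lam ^ 2 * x 1 ^ 2 = y ^ 2}

/-- The point `(a, b)` of the Euclidean plane. -/
def pt (a b : ℝ) : EuclideanSpace ℝ (Fin 2) :=
  (WithLp.equiv 2 (Fin 2 → ℝ)).symm ![a, b]

/-
The quadratic form `q(x) = x₁² + λ²x₂²` has `E_y = {q = y²}`. By Cauchy–Schwarz for the inner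
product associated with `q`, two points `a ∈ E_y`, `b ∈ E_{y'}` satisfy `⟨a, b⟩_q ≤ y y'`, hence
`(y − y')² ≤ q(a − b) ≤ λ² ‖a − b‖²` as `λ ≥ 1`. The endpoints of the minor axes attain this bound.
-/

theorem setEDist_eq_of_forall_edist_le {X : Type*} [PseudoEMetricSpace X] {A B : Set X}
    {a b : X} (ha : a ∈ A) (hb : b ∈ B) (h : ∀ x ∈ A, ∀ z ∈ B, edist a b ≤ edist x z) :
    setEDist A B = edist a b :=
  le_antisymm ((iInf₂_le a ha).trans (iInf₂_le b hb)) (le_iInf₂ fun x hx => le_iInf₂ (h x hx))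

theorem EuclideanSpace.dist_sq_fin_two (x z : EuclideanSpace ℝ (Fin 2)) :
    dist x z ^ 2 = (x 0 - z 0) ^ 2 + (x 1 - z 1) ^ 2 := by
  rw [EuclideanSpace.dist_eq, Real.sq_sqrt (by positivity)]
  simp [Fin.sum_univ_two, Real.dist_eq, sq_abs]

theorem weighted_inner_le_of_sq_eq {c y y' a₁ a₂ b₁ b₂ : ℝ} (hc : 0 ≤ c) (hy : 0 ≤ y)
    (hy' : 0 ≤ y') (ha : a₁ ^ 2 + c * a₂ ^ 2 = y ^ 2) (hb : b₁ ^ 2 + c * b₂ ^ 2 = y' ^ 2) :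
    a₁ * b₁ + c * a₂ * b₂ ≤ y * y' := by
  have lagrange : (a₁ * b₁ + c * a₂ * b₂) ^ 2 + c * (a₁ * b₂ - a₂ * b₁) ^ 2 = (y * y') ^ 2 := by
    rw [mul_pow, ← ha, ← hb]; ring
  refine abs_le_of_sq_le_sq' ?_ (by positivity) |>.2
  nlinarith [mul_nonneg hc (sq_nonneg (a₁ * b₂ - a₂ * b₁))]

theorem sq_sub_le_mul_dist_sq_of_mem_Ell {lam y y' : ℝ} (hlam : 1 ≤ lam) (hy : 0 ≤ y)
    (hy' : 0 ≤ y') {a b : EuclideanSpace ℝ (Fin 2)} (ha : a ∈ Ell lam y) (hb : b ∈ Ell lam y') :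
    (y - y') ^ 2 ≤ lam ^ 2 * dist a b ^ 2 := by
  have hinner := weighted_inner_le_of_sq_eq (sq_nonneg lam) hy hy' ha hb
  have hlam_sq : 1 ≤ lam ^ 2 := one_le_pow₀ hlam
  rw [EuclideanSpace.dist_sq_fin_two]
  calc (y - y') ^ 2 = y ^ 2 + y' ^ 2 - 2 * (y * y') := by ring
    _ ≤ (a 0 - b 0) ^ 2 + lam ^ 2 * (a 1 - b 1) ^ 2 := by
        simp only [Ell, Set.mem_ofPred_eq] at ha hb; linarith
    _ ≤ lam ^ 2 * ((a 0 - b 0) ^ 2 + (a 1 - b 1) ^ 2) := by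
        nlinarith [mul_nonneg (sub_nonneg.2 hlam_sq) (sq_nonneg (a 0 - b 0))]

theorem abs_sub_div_le_dist_of_mem_Ell {lam y y' : ℝ} (hlam : 1 ≤ lam) (hy : 0 ≤ y)
    (hy' : 0 ≤ y') {a b : EuclideanSpace ℝ (Fin 2)} (ha : a ∈ Ell lam y) (hb : b ∈ Ell lam y') :
    |y - y'| / lam ≤ dist a b := by
  have hlam_pos : 0 < lam := zero_lt_one.trans_le hlam
  rw [div_le_iff₀ hlam_pos, mul_comm]
  have h := sq_sub_le_mul_dist_sq_of_mem_Ell hlam hy hy' ha hb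
  rw [← mul_pow] at h
  exact abs_le_of_sq_le_sq h (by positivity)

@[simp] theorem pt_apply_zero (s t : ℝ) : pt s t 0 = s := rfl

@[simp] theorem pt_apply_one (s t : ℝ) : pt s t 1 = t := rfl

theorem pt_zero_div_mem_Ell {lam : ℝ} (hlam : lam ≠ 0) (y : ℝ) : pt 0 (y / lam) ∈ Ell lam y := by
  simp only [Ell, Set.mem_ofPred_eq, pt_apply_zero, pt_apply_one]
  field_simp
  ring

theorem dist_pt_zero_pt_zero (s t : ℝ) : dist (pt 0 s) (pt 0 t) = |s - t| := by
  rw [← Real.sqrt_sq (dist_nonneg), EuclideanSpace.dist_sq_fin_two]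
  simp [Real.sqrt_sq_eq_abs]

/-- For `λ ≥ 1` and `y, y' > 0`, the Euclidean distance between the ellipses
`E_y` and `E_{y'}` is `|y − y'|/λ`, attained at the endpoints of the minor axes,
`(0, y/λ)` and `(0, y'/λ)`. -/
theorem setEDist_ellipses (lam : ℝ) (hlam : 1 ≤ lam) (y y' : ℝ) (hy : 0 < y) (hy' : 0 < y') :
    setEDist (Ell lam y) (Ell lam y') = ENNReal.ofReal (|y - y'| / lam) ∧
    pt 0 (y / lam) ∈ Ell lam y ∧ pt 0 (y' / lam) ∈ Ell lam y' ∧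
    edist (pt 0 (y / lam)) (pt 0 (y' / lam)) = ENNReal.ofReal (|y - y'| / lam) := by
  have hlam_pos : 0 < lam := zero_lt_one.trans_le hlam
  have hmem := pt_zero_div_mem_Ell hlam_pos.ne' y
  have hmem' := pt_zero_div_mem_Ell hlam_pos.ne' y'
  have hedist : edist (pt 0 (y / lam)) (pt 0 (y' / lam)) = ENNReal.ofReal (|y - y'| / lam) := by
    rw [edist_dist, dist_pt_zero_pt_zero, ← sub_div, abs_div, abs_of_pos hlam_pos]
  refine ⟨?_, hmem, hmem', hedist⟩
  rw [← hedist]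
  refine setEDist_eq_of_forall_edist_le hmem hmem' fun a ha b hb => ?_
  rw [hedist, edist_dist]
  exact ENNReal.ofReal_le_ofReal (abs_sub_div_le_dist_of_mem_Ell hlam hy.le hy'.le ha hb)
end
end
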